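/- In every subset space model M, for all formulas φ, ψ and every neighborhood situation (s,U): (s,U) satisfies [φ]Kψ if and only if (s,U) satisfies φ → K[φ]ψ. (Soundness of the knowledge reduction axiom for public announcements in subset space logic.) -/

import Mathlib

/-- Formulas of subset space public announcement logic: propositional letters,
negation, conjunction, knowledge `K`, effort `□`, and public announcement `[φ]ψ`. -/
inductive Form where
  | atom : ℕ → Form
  | neg : Form → Form
  | and : Form → Form → Form
  | know : Form → Form
  | box : Form → Form
  | ann : Form → Form → Form
deriving DecidableEq

/-- Material implication `φ → ψ` as the derived connective `¬(φ ∧ ¬ψ)`. -/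
def Form.imp (φ ψ : Form) : Form := .neg (.and φ (.neg ψ))

/-- A subset space model on a (nonempty) set `S`: a collection `σ` of subsets of `S`
and a valuation assigning each propositional letter a subset of `S`. -/
structure SSModel (S : Type) where
  sigma : Set (Set S)
  val : ℕ → Set S

/-- `U_φ`: the points of `U` surviving the announcement, where `sat t V` stands for
"(t,V) satisfies the announced formula". -/
def SSModel.updateSet {S : Type} (sat : S → Set S → Prop) (U : Set S) : Set S :=
  {t ∈ U | sat t U}

/-- The updated model `M_φ`, for an announcement whose satisfaction relation is `sat`:
carrier `S_φ` is implicit; `σ_φ = {U_φ : U ∈ σ, U_φ ≠ ∅}` and `v_φ(p) = v(p) ∩ S_φ`. -/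
def SSModel.update {S : Type} (M : SSModel S) (sat : S → Set S → Prop) : SSModel S where
  sigma := {V | ∃ U ∈ M.sigma, V = SSModel.updateSet sat U ∧ V ≠ ∅}
  val := fun p => M.val p ∩ {s | ∃ U ∈ M.sigma, s ∈ U ∧ sat s U}

/-- Satisfaction `(s,U) ⊨ φ` in a subset space model. -/
def Sat {S : Type} : SSModel S → Form → S → Set S → Prop
  | M, .atom p, s, _ => s ∈ M.val p
  | M, .neg φ, s, U => ¬ Sat M φ s U
  | M, .and φ ψ, s, U => Sat M φ s U ∧ Sat M ψ s U
  | M, .know φ, _, U => ∀ t ∈ U, Sat M φ t U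
  | M, .box φ, s, U => ∀ V ∈ M.sigma, s ∈ V → V ⊆ U → Sat M φ s V
  | M, .ann φ ψ, s, U =>
      Sat M φ s U →
        Sat (M.update (fun t V => Sat M φ t V)) ψ s
          (SSModel.updateSet (fun t V => Sat M φ t V) U)

theorem sat_imp_iff {S : Type} (M : SSModel S) (φ ψ : Form) (s : S) (U : Set S) :
    Sat M (φ.imp ψ) s U ↔ (Sat M φ s U → Sat M ψ s U) := by
  simp only [Form.imp, Sat, not_and, not_not]

theorem sat_know_ann_iff {S : Type} (M : SSModel S) (φ ψ : Form) (s : S) (U : Set S) :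
    Sat M (.know (.ann φ ψ)) s U ↔
      Sat (M.update (fun t V => Sat M φ t V)) (.know ψ) s
        (SSModel.updateSet (fun t V => Sat M φ t V) U) :=
  ⟨fun h t ht => h t ht.1 ht.2, fun h t ht hφ => h t ⟨ht, hφ⟩⟩

theorem knowledge_reduction_sound_general {S : Type} (M : SSModel S) (φ ψ : Form)
    (s : S) (U : Set S) :
    Sat M (.ann φ (.know ψ)) s U ↔ Sat M (Form.imp φ (.know (.ann φ ψ))) s U := by
  rw [sat_imp_iff, sat_know_ann_iff]
  rfl

/-- Knowledge reduction axiom for PAL over subset spaces: at every neighborhood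
situation `(s,U)`, `[φ]Kψ ↔ (φ → K[φ]ψ)`. -/
theorem knowledge_reduction_sound {S : Type} (M : SSModel S) (φ ψ : Form)
    (s : S) (U : Set S) (hU : U ∈ M.sigma) (hs : s ∈ U) :
    Sat M (.ann φ (.know ψ)) s U ↔ Sat M (Form.imp φ (.know (.ann φ ψ))) s U :=
  knowledge_reduction_sound_general M φ ψ s U
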